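/- For every integer N ≥ 0, the identity sum_{k=0}^{N} [4k-1] (q^{-2};q^4)_k^2 / (q^4;q^4)_k^2 · q^{4k} = -(1+q^{4N+1}) / (q(1+q)(-q^2;q^2)_N^4) · (qbinom(2N,N; q^2))^2 holds in ℚ(q), where qbinom(2N,N;q^2) denotes the q-binomial coefficient in base q^2. -/
import Mathlib


open RatFunc

noncomputable def q : RatFunc ℚ := RatFunc.X

/-- q-shifted factorial `(a;b)_m = ∏_{j=0}^{m-1} (1 - a b^j)`. -/
noncomputable def qpoch (a b : RatFunc ℚ) (m : ℕ) : RatFunc ℚ :=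
  ∏ j ∈ Finset.range m, (1 - a * b ^ j)

/-- q-integer `[m] = (1-q^m)/(1-q)` for an arbitrary integer `m`. -/
noncomputable def qintZ (m : ℤ) : RatFunc ℚ := (1 - q ^ m) / (1 - q)

/-- q-integer `[m] = 1 + q + ⋯ + q^{m-1}`. -/
noncomputable def qint (m : ℕ) : RatFunc ℚ := ∑ i ∈ Finset.range m, q ^ i

/-- q-binomial coefficient `(q;q)_n / ((q;q)_k (q;q)_{n-k})`. -/
noncomputable def qbinom (n k : ℕ) : RatFunc ℚ :=
  qpoch q q n / (qpoch q q k * qpoch q q (n - k))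

/-- q-binomial coefficient in base `q²`: `(q²;q²)_n / ((q²;q²)_k (q²;q²)_{n-k})`. -/
noncomputable def qbinom2 (n k : ℕ) : RatFunc ℚ :=
  qpoch (q ^ 2) (q ^ 2) n / (qpoch (q ^ 2) (q ^ 2) k * qpoch (q ^ 2) (q ^ 2) (n - k))

/- ### auxiliary lemmas -/

lemma hq0 : q ≠ 0 := RatFunc.X_ne_zero

lemma one_sub_q_pow_ne (n : ℕ) (h : n ≠ 0) : (1 : RatFunc ℚ) - q ^ n ≠ 0 := by
  have : (1 : RatFunc ℚ) - q ^ n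
      = algebraMap (Polynomial ℚ) (RatFunc ℚ) (1 - Polynomial.X ^ n) := by
    simp [q, RatFunc.algebraMap_X]
  rw [this]
  apply RatFunc.algebraMap_ne_zero
  intro hEq
  have := congrArg (fun p => Polynomial.coeff p n) hEq
  simp [Polynomial.coeff_X_pow, Polynomial.coeff_one, h] at this

lemma one_add_q_pow_ne (n : ℕ) : (1 : RatFunc ℚ) + q ^ n ≠ 0 := by
  rcases Nat.eq_zero_or_pos n with h | h
  · subst h
    have h2 : (1 : RatFunc ℚ) + q ^ 0 = 2 := by norm_num
    rw [h2, (map_ofNat (algebraMap (Polynomial ℚ) (RatFunc ℚ)) 2).symm]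
    apply RatFunc.algebraMap_ne_zero
    norm_num
  · have : (1 : RatFunc ℚ) + q ^ n
        = algebraMap (Polynomial ℚ) (RatFunc ℚ) (1 + Polynomial.X ^ n) := by
      simp [q, RatFunc.algebraMap_X]
    rw [this]
    apply RatFunc.algebraMap_ne_zero
    intro hEq
    have := congrArg (fun p => Polynomial.coeff p n) hEq
    simp [Polynomial.coeff_X_pow, Polynomial.coeff_one, h.ne'] at this

lemma one_sub_q_ne : (1 : RatFunc ℚ) - q ≠ 0 := by
  have := one_sub_q_pow_ne 1 one_ne_zero; simpa using this

lemma one_add_q_ne : (1 : RatFunc ℚ) + q ≠ 0 := by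
  have := one_add_q_pow_ne 1; simpa using this

lemma qpoch_succ (a b : RatFunc ℚ) (m : ℕ) :
    qpoch a b (m + 1) = qpoch a b m * (1 - a * b ^ m) := Finset.prod_range_succ _ _

lemma qpoch_zero (a b : RatFunc ℚ) : qpoch a b 0 = 1 := rfl

lemma P_ne (N : ℕ) : qpoch (q ^ 4) (q ^ 4) N ≠ 0 := by
  unfold qpoch
  apply Finset.prod_ne_zero_iff.mpr
  intro j _
  have : (1 : RatFunc ℚ) - q ^ 4 * (q ^ 4) ^ j = 1 - q ^ (4 * j + 4) := by ring
  rw [this]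
  exact one_sub_q_pow_ne _ (by omega)

lemma B_ne (N : ℕ) : qpoch (-q ^ 2) (q ^ 2) N ≠ 0 := by
  unfold qpoch
  apply Finset.prod_ne_zero_iff.mpr
  intro j _
  have : (1 : RatFunc ℚ) - (-q ^ 2) * (q ^ 2) ^ j = 1 + q ^ (2 * j + 2) := by ring
  rw [this]
  exact one_add_q_pow_ne _

/-- The key algebraic identity for the induction step. -/
lemma key_step {K : Type*} [Field K] (x u E P : K) (hx : x ≠ 0)
    (hx1 : (1:K) - x ≠ 0) (hx2 : (1:K) + x ≠ 0) (hP : P ≠ 0)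
    (hu : (1:K) - x^4*u ≠ 0) :
    -(1 + x*u) * E^2 / (x*(1+x)*P^2) +
      (1 - x^3*u)/(1-x) * ((1 - x⁻¹^2)*E)^2 / (P*(1 - x^4*u))^2 * (x^4*u)
    = -(1 + x^5*u) * (E*(1 - x^2*u))^2 / (x*(1+x)*(P*(1-x^4*u))^2) := by
  have hd1 : x*(1+x)*P^2 ≠ 0 :=
    mul_ne_zero (mul_ne_zero hx hx2) (pow_ne_zero _ hP)
  have hd2 : (1-x)*x^4*(P*(1 - x^4*u))^2 ≠ 0 :=
    mul_ne_zero (mul_ne_zero hx1 (pow_ne_zero _ hx))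
      (pow_ne_zero _ (mul_ne_zero hP hu))
  have hd3 : x*(1+x)*(P*(1-x^4*u))^2 ≠ 0 :=
    mul_ne_zero (mul_ne_zero hx hx2) (pow_ne_zero _ (mul_ne_zero hP hu))
  have h2 : (1 - x^3*u)/(1-x) * ((1 - x⁻¹^2)*E)^2 / (P*(1 - x^4*u))^2 * (x^4*u)
      = (1 - x^3*u) * ((x^2 - 1)*E)^2 * (x^4*u) / ((1-x)*x^4*(P*(1 - x^4*u))^2) := by
    rw [show (1 - x⁻¹^2) = (x^2-1)/x^2 by field_simp]
    field_simp
  rw [h2, div_add_div _ _ hd1 hd2, div_eq_div_iff (mul_ne_zero hd1 hd2) hd3]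
  ring

/-- `(q^{-2};q^4)_{k+1} = (1-q^{-2}) (q^2;q^4)_k`. -/
lemma A_succ (k : ℕ) :
    qpoch (q⁻¹ ^ 2) (q ^ 4) (k + 1) = (1 - q⁻¹ ^ 2) * qpoch (q ^ 2) (q ^ 4) k := by
  induction k with
  | zero => simp [qpoch_succ, qpoch_zero]
  | succ n ih =>
      rw [qpoch_succ, ih, qpoch_succ]
      have h : q⁻¹ ^ 2 * (q ^ 4) ^ (n + 1) = q ^ 2 * (q ^ 4) ^ n := by
        field_simp [hq0]
        ring
      rw [h]
      ring

/-- `(q^2;q^2)_{2N} = (q^2;q^4)_N (q^4;q^4)_N`. -/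
lemma C_two_mul (N : ℕ) :
    qpoch (q ^ 2) (q ^ 2) (2 * N) = qpoch (q ^ 2) (q ^ 4) N * qpoch (q ^ 4) (q ^ 4) N := by
  induction N with
  | zero => simp [qpoch_zero]
  | succ n ih =>
      have h2 : 2 * (n + 1) = 2 * n + 1 + 1 := by ring
      rw [h2, qpoch_succ, qpoch_succ, ih, qpoch_succ, qpoch_succ]
      ring

/-- `(q^2;q^2)_N (-q^2;q^2)_N = (q^4;q^4)_N`. -/
lemma C_mul_B (N : ℕ) :
    qpoch (q ^ 2) (q ^ 2) N * qpoch (-q ^ 2) (q ^ 2) N = qpoch (q ^ 4) (q ^ 4) N := by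
  induction N with
  | zero => simp [qpoch_zero]
  | succ n ih =>
      rw [qpoch_succ, qpoch_succ, qpoch_succ, ← ih]
      ring

lemma key_rhs {K : Type*} [Field K] (x C E P B : K) (hx : x ≠ 0) (hx2 : (1:K)+x ≠ 0)
    (hP : P ≠ 0) (hB : B ≠ 0) :
    -(1+C)*E^2/(x*(1+x)*P^2) = -((1+C)/(x*(1+x)*B^4))*(E*B^2/P)^2 := by
  field_simp

/-- central q-binomial in terms of qpoch products. -/
lemma qbinom2_central (N : ℕ) :
    qbinom2 (2 * N) N
      = qpoch (q ^ 2) (q ^ 4) N * qpoch (-q ^ 2) (q ^ 2) N ^ 2 / qpoch (q ^ 4) (q ^ 4) N := by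
  unfold qbinom2
  rw [show 2 * N - N = N by omega, C_two_mul]
  have hC : qpoch (q ^ 2) (q ^ 2) N = qpoch (q ^ 4) (q ^ 4) N / qpoch (-q ^ 2) (q ^ 2) N := by
    rw [eq_div_iff (B_ne N)]; exact C_mul_B N
  rw [hC]
  have hP := P_ne N
  have hB := B_ne N
  field_simp

/-- The sum in the simplified form. -/
lemma sumE (N : ℕ) :
    ∑ k ∈ Finset.range (N + 1),
        qintZ (4 * k - 1) * qpoch (q⁻¹ ^ 2) (q ^ 4) k ^ 2 / qpoch (q ^ 4) (q ^ 4) k ^ 2 *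
          q ^ (4 * k)
      = -(1 + q ^ (4 * N + 1)) * qpoch (q ^ 2) (q ^ 4) N ^ 2 /
          (q * (1 + q) * qpoch (q ^ 4) (q ^ 4) N ^ 2) := by
  induction N with
  | zero =>
      rw [Finset.sum_range_one]
      simp only [qpoch_zero, Nat.cast_zero, mul_zero, zero_sub, qintZ, pow_zero, one_pow,
        mul_one, div_one, zpow_neg, zpow_one]
      have h1 := one_sub_q_ne
      have h2 := one_add_q_ne
      field_simp [hq0]
      ring
  | succ n ih =>
      rw [Finset.sum_range_succ, ih]
      have hz : qintZ (4 * ((n : ℕ) + 1 : ℕ) - 1) = (1 - q ^ (4 * n + 3)) / (1 - q) := by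
        unfold qintZ
        rw [show (4 * (((n : ℕ) + 1 : ℕ) : ℤ) - 1) = ((4 * n + 3 : ℕ) : ℤ) by push_cast; ring,
          zpow_natCast]
      rw [hz, A_succ, qpoch_succ, qpoch_succ]
      rw [show q ^ (4 * n + 1) = q * (q^4)^n by ring,
        show q ^ (4 * n + 3) = q^3 * (q^4)^n by ring,
        show q ^ (4 * (n+1)) = q^4 * (q^4)^n by ring,
        show q ^ (4 * (n+1) + 1) = q^5 * (q^4)^n by ring]
      exact key_step q ((q^4)^n) (qpoch (q ^ 2) (q ^ 4) n) (qpoch (q ^ 4) (q ^ 4) n)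
        hq0 one_sub_q_ne one_add_q_ne (P_ne n)
        (by have : (1 : RatFunc ℚ) - q^4*(q^4)^n = 1 - q^(4*n+4) := by ring
            rw [this]; exact one_sub_q_pow_ne _ (by omega))

theorem sum_identity_q2 (N : ℕ) :
    ∑ k ∈ Finset.range (N + 1),
        qintZ (4 * k - 1) * qpoch (q⁻¹ ^ 2) (q ^ 4) k ^ 2 / qpoch (q ^ 4) (q ^ 4) k ^ 2 *
          q ^ (4 * k)
      = -((1 + q ^ (4 * N + 1)) / (q * (1 + q) * qpoch (-q ^ 2) (q ^ 2) N ^ 4)) *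
          qbinom2 (2 * N) N ^ 2 := by
  rw [sumE, qbinom2_central]
  exact key_rhs q (q ^ (4 * N + 1)) (qpoch (q ^ 2) (q ^ 4) N) (qpoch (q ^ 4) (q ^ 4) N)
    (qpoch (-q ^ 2) (q ^ 2) N) hq0 one_add_q_ne (P_ne N) (B_ne N)
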